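/- arXiv:2601.13159 — 2 statements merged into one kernel-verified Lean document; each statement's English description precedes it below -/
import Mathlib

section
/- Let U be a finite set of pairwise distinct unit vectors in ℝ² with pos(U) = ℝ². Then |U_□| ≤ 4, and |U_□| = 4 if and only if U = {u, −u, v, −v} for two linearly independent unit vectors u, v (i.e., U defines a parallelogram). -/
/-!
By Carathéodory's theorem for cones, a vector of the plane in `pos U` is a nonnegative
combination of two vectors of `U`. Applied to `-u` for `u ∈ U_□`, this gives `-u ∈ U`: otherwise
`-u` lies in the open cone of two independent `v, w ∈ U`, and `{u, v, w}` spans positively.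

Now let `u₁, u₂ ∈ U_□` be independent, so `±u₁, ±u₂ ∈ U`. Any other `w ∈ U` has
`-w = p a + q b` with `p, q > 0`, `a = ±u₁`, `b = ±u₂`. Read as is, this says `w ∉ U_□`; read
as `-a = p⁻¹ w + (q / p) b`, it says `a ∉ U_□`. Hence `U_□ ⊆ {±u₁, ±u₂}`, and if equality
holds then `U = {±u₁, ±u₂}`. If `U_□` contains no independent pair, it lies in some `{u, -u}`.
Conversely, any three vectors of `{±a, ±c}` miss one of them and so lie in a closed half-plane.
-/

open RealInnerProductSpace

noncomputable section

abbrev V2 : Type := EuclideanSpace ℝ (Fin 2)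

/-- The positive hull: all nonnegative linear combinations of elements of `M`. -/
def pos {E : Type*} [AddCommMonoid E] [Module ℝ E] (M : Set E) : Set E :=
  {x | ∃ (s : Finset E) (c : E → ℝ),
    (↑s : Set E) ⊆ M ∧ (∀ v, 0 ≤ c v) ∧ x = ∑ v ∈ s, c v • v}

/-- The set `U_□` of vectors of `U` not belonging to any positively spanning triple. -/
def Usq (U : Set V2) : Set V2 :=
  {u ∈ U | ¬ ∃ v ∈ U, ∃ w ∈ U, pos {u, v, w} = Set.univ}

theorem Set.ncard_le_three {α : Type*} (a b c : α) : ({a, b, c} : Set α).ncard ≤ 3 := by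
  classical
  simpa using (Set.ncard_coe_finset ({a, b, c} : Finset α)).trans_le Finset.card_le_three

theorem Set.ncard_le_four {α : Type*} (a b c d : α) : ({a, b, c, d} : Set α).ncard ≤ 4 := by
  classical
  simpa using (Set.ncard_coe_finset ({a, b, c, d} : Finset α)).trans_le Finset.card_le_four

section PositiveHull

variable {E : Type*} [AddCommGroup E] [Module ℝ E] {M : Set E}

theorem subset_pos : M ⊆ pos M := fun m hm =>
  ⟨{m}, fun _ => 1, by simpa using hm, fun _ => zero_le_one, by simp⟩

theorem smul_mem_pos {x : E} (hx : x ∈ pos M) {r : ℝ} (hr : 0 ≤ r) : r • x ∈ pos M := by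
  obtain ⟨s, c, hs, hc, rfl⟩ := hx
  exact ⟨s, fun v => r * c v, hs, fun v => mul_nonneg hr (hc v), by
    simp only [Finset.smul_sum, mul_smul]⟩

theorem add_mem_pos {x y : E} (hx : x ∈ pos M) (hy : y ∈ pos M) : x + y ∈ pos M := by
  classical
  obtain ⟨s, c, hs, hc, rfl⟩ := hx
  obtain ⟨t, d, ht, hd, rfl⟩ := hy
  have hc' : ∀ v, 0 ≤ if v ∈ s then c v else 0 := fun v => by split_ifs <;> simp [hc]
  have hd' : ∀ v, 0 ≤ if v ∈ t then d v else 0 := fun v => by split_ifs <;> simp [hd]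
  refine ⟨s ∪ t, fun v => (if v ∈ s then c v else 0) + (if v ∈ t then d v else 0),
    by simpa using ⟨hs, ht⟩, fun v => add_nonneg (hc' v) (hd' v), ?_⟩
  simp only [add_smul, Finset.sum_add_distrib, ite_smul, zero_smul, Finset.sum_ite_mem,
    Finset.union_inter_cancel_left, Finset.union_inter_cancel_right]

theorem smul_add_smul_add_smul_mem_pos {u v w : E} {a b c : ℝ} (ha : 0 ≤ a) (hb : 0 ≤ b)
    (hc : 0 ≤ c) : a • u + b • v + c • w ∈ pos {u, v, w} := by
  refine add_mem_pos (add_mem_pos ?_ ?_) ?_ <;> refine smul_mem_pos (subset_pos ?_) ‹_› <;> simp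

end PositiveHull

theorem pos_ne_univ_of_inner_nonneg {E : Type*} [NormedAddCommGroup E] [InnerProductSpace ℝ E]
    {M : Set E} {d : E} (hd : d ≠ 0) (h : ∀ m ∈ M, 0 ≤ ⟪d, m⟫) : pos M ≠ Set.univ := by
  intro huniv
  obtain ⟨s, c, hs, hc, hsum⟩ : -d ∈ pos M := huniv ▸ Set.mem_univ _
  have hnonneg : 0 ≤ ⟪d, -d⟫ := by
    rw [hsum, inner_sum]
    exact Finset.sum_nonneg fun v hv => by
      rw [real_inner_smul_right]; exact mul_nonneg (hc v) (h v (hs hv))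
  rw [inner_neg_right, real_inner_self_eq_norm_sq] at hnonneg
  have : 0 < ‖d‖ := norm_pos_iff.mpr hd
  nlinarith

theorem exists_sum_erase_eq_of_finrank_lt_card {𝕜 E : Type*} [Field 𝕜] [LinearOrder 𝕜]
    [IsStrictOrderedRing 𝕜] [AddCommGroup E] [Module 𝕜 E] [FiniteDimensional 𝕜 E]
    [DecidableEq E] {s : Finset E} (hs : Module.finrank 𝕜 E < s.card) {c : E → 𝕜}
    (hc : ∀ v, 0 ≤ c v) :
    ∃ y ∈ s, ∃ c' : E → 𝕜, (∀ v, 0 ≤ c' v) ∧ ∑ v ∈ s.erase y, c' v • v = ∑ v ∈ s, c v • v := by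
  obtain ⟨g, hg, x, hx, hgx⟩ := Module.exists_nontrivial_relation_of_finrank_lt_card hs
  wlog hgx_pos : 0 < g x generalizing g
  · exact this (-g) (by simp [neg_smul, Finset.sum_neg_distrib, hg]) (by simpa using hgx)
      (by simpa using lt_of_le_of_ne (not_lt.mp hgx_pos) hgx)
  obtain ⟨y, hy, hmin⟩ := Finset.exists_min_image {v ∈ s | 0 < g v} (fun v => c v / g v)
    ⟨x, Finset.mem_filter.mpr ⟨hx, hgx_pos⟩⟩
  rw [Finset.mem_filter] at hy
  set t := c y / g y
  have ht : 0 ≤ t := div_nonneg (hc y) hy.2.le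
  have hle : ∀ v ∈ s, t * g v ≤ c v := fun v hv => by
    rcases le_or_gt (g v) 0 with hgv | hgv
    · exact (mul_nonpos_of_nonneg_of_nonpos ht hgv).trans (hc v)
    · exact (le_div_iff₀ hgv).mp (hmin v (Finset.mem_filter.mpr ⟨hv, hgv⟩))
  refine ⟨y, hy.1, fun v => max (c v - t * g v) 0, fun v => le_max_right _ _, ?_⟩
  have hcy : max (c y - t * g y) 0 = 0 := by simp [t, hy.2.ne']
  rw [Finset.sum_erase _ (by simp only [hcy, zero_smul])]
  calc ∑ v ∈ s, max (c v - t * g v) 0 • v = ∑ v ∈ s, (c v • v - t • g v • v) :=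
        Finset.sum_congr rfl fun v hv => by
          rw [max_eq_left (sub_nonneg.mpr (hle v hv)), sub_smul, mul_smul]
    _ = ∑ v ∈ s, c v • v := by
        rw [Finset.sum_sub_distrib, ← Finset.smul_sum, hg, smul_zero, sub_zero]

theorem exists_card_le_finrank_of_mem_pos {E : Type*} [AddCommGroup E] [Module ℝ E]
    [FiniteDimensional ℝ E] {M : Set E} {x : E} (hx : x ∈ pos M) :
    ∃ (s : Finset E) (c : E → ℝ), (↑s : Set E) ⊆ M ∧ s.card ≤ Module.finrank ℝ E ∧
      (∀ v, 0 ≤ c v) ∧ x = ∑ v ∈ s, c v • v := by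
  classical
  obtain ⟨s, c, hs, hc, rfl⟩ := hx
  induction h : s.card using Nat.strong_induction_on generalizing s c with
  | _ n ih =>
    by_cases hn : n ≤ Module.finrank ℝ E
    · exact ⟨s, c, hs, h ▸ hn, hc, rfl⟩
    obtain ⟨y, hy, c', hc', hsum⟩ := exists_sum_erase_eq_of_finrank_lt_card (h ▸ not_le.mp hn) hc
    rw [← hsum]
    exact ih _ (h ▸ Finset.card_erase_lt_of_mem hy) _ _
      ((Finset.coe_subset.mpr (Finset.erase_subset _ _)).trans hs) hc' rfl

theorem eq_or_eq_neg_of_eq_smul_of_norm_eq {E : Type*} [NormedAddCommGroup E] [NormedSpace ℝ E]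
    {x y : E} {r : ℝ} (hn : ‖x‖ = ‖y‖) (h : x = r • y) : x = y ∨ x = -y := by
  rcases le_or_gt 0 r with hr | hr
  · exact .inl (h ▸ (SameRay.sameRay_nonneg_smul_left y hr).eq_of_norm_eq (h ▸ hn))
  · have h' : x = (-r) • -y := by rw [h, smul_neg, neg_smul, neg_neg]
    exact .inr (h' ▸ (SameRay.sameRay_nonneg_smul_left (-y) (neg_nonneg.mpr hr.le)).eq_of_norm_eq
      (by rw [← h', hn, norm_neg]))

theorem exists_pos_smul_eq_smul {E : Type*} [AddCommGroup E] [Module ℝ E] (a : E) {α : ℝ}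
    (hα : α ≠ 0) : ∃ a' ∈ ({a, -a} : Set E), ∃ p : ℝ, 0 < p ∧ α • a = p • a' := by
  rcases hα.lt_or_gt with hα | hα
  · exact ⟨-a, by simp, -α, by linarith, by rw [smul_neg, neg_smul, neg_neg]⟩
  · exact ⟨a, by simp, α, hα, rfl⟩

def det2 (x y : V2) : ℝ := x 0 * y 1 - x 1 * y 0

section Det2

variable {v w x y : V2}

@[simp] theorem det2_self (x : V2) : det2 x x = 0 := by simp [det2, mul_comm]

@[simp] theorem det2_zero_left (x : V2) : det2 0 x = 0 := by simp [det2]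

@[simp] theorem det2_zero_right (x : V2) : det2 x 0 = 0 := by simp [det2]

@[simp] theorem det2_neg_left (x y : V2) : det2 (-x) y = -det2 x y := by simp [det2]; ring

@[simp] theorem det2_neg_right (x y : V2) : det2 x (-y) = -det2 x y := by simp [det2]; ring

@[simp] theorem det2_add_right (x y z : V2) : det2 x (y + z) = det2 x y + det2 x z := by
  simp [det2]; ring

@[simp] theorem det2_add_left (x y z : V2) : det2 (x + y) z = det2 x z + det2 y z := by
  simp [det2]; ring

@[simp] theorem det2_smul_right (x y : V2) (r : ℝ) : det2 x (r • y) = r * det2 x y := by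
  simp [det2]; ring

@[simp] theorem det2_smul_left (x y : V2) (r : ℝ) : det2 (r • x) y = r * det2 x y := by
  simp [det2]; ring

theorem det2_swap (x y : V2) : det2 x y = -det2 y x := by simp [det2]; ring

theorem inner_eq_det2 (x y : V2) : ⟪!₂[-x 1, x 0], y⟫ = det2 x y := by
  simp [PiLp.inner_apply, Fin.sum_univ_two, det2]; ring

theorem norm_sq_smul_eq_inner_smul_of_det2_eq_zero (h : det2 v w = 0) :
    ‖w‖ ^ 2 • v = ⟪v, w⟫ • w := by
  unfold det2 at h
  ext i
  fin_cases i
  · simp [EuclideanSpace.norm_sq_eq, Fin.sum_univ_two, PiLp.inner_apply]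
    linear_combination w 1 * h
  · simp [EuclideanSpace.norm_sq_eq, Fin.sum_univ_two, PiLp.inner_apply]
    linear_combination -w 0 * h

theorem eq_or_eq_neg_of_det2_eq_zero (hw : w ≠ 0) (hn : ‖v‖ = ‖w‖) (h : det2 v w = 0) :
    v = w ∨ v = -w := by
  have hw2 : ‖w‖ ^ 2 ≠ 0 := by positivity
  refine eq_or_eq_neg_of_eq_smul_of_norm_eq hn (r := ⟪v, w⟫ / ‖w‖ ^ 2) ?_
  rw [div_eq_inv_mul, mul_smul, ← norm_sq_smul_eq_inner_smul_of_det2_eq_zero h, inv_smul_smul₀ hw2]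

theorem linearIndependent_iff_det2_ne_zero : LinearIndependent ℝ ![x, y] ↔ det2 x y ≠ 0 := by
  rw [LinearIndependent.pair_iff]
  constructor
  · intro h hdet
    by_cases hy : y = 0
    · simpa using h 0 1 (by simp [hy])
    · have := h (‖y‖ ^ 2) (-⟪x, y⟫) (by
        rw [norm_sq_smul_eq_inner_smul_of_det2_eq_zero hdet, neg_smul, add_neg_cancel])
      simp [hy] at this
  · intro hdet s t hst
    have hs : s * det2 x y = 0 := by simpa using congrArg (det2 · y) hst
    have ht : t * det2 x y = 0 := by simpa using congrArg (det2 x ·) hst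
    exact ⟨(mul_eq_zero.mp hs).resolve_right hdet, (mul_eq_zero.mp ht).resolve_right hdet⟩

theorem det2_smul_eq_add (v w x : V2) : det2 v w • x = det2 x w • v + det2 v x • w := by
  ext i
  fin_cases i <;> simp [det2] <;> ring

theorem exists_eq_smul_add_smul_of_det2_ne_zero (h : det2 v w ≠ 0) (x : V2) :
    ∃ α β : ℝ, x = α • v + β • w :=
  ⟨det2 x w / det2 v w, det2 v x / det2 v w, by
    rw [div_eq_inv_mul, div_eq_inv_mul, mul_smul, mul_smul, ← smul_add, ← det2_smul_eq_add,
      inv_smul_smul₀ h]⟩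

end Det2

theorem exists_smul_add_smul_of_mem_pos {E : Type*} [AddCommGroup E] [Module ℝ E]
    [FiniteDimensional ℝ E] (hE : Module.finrank ℝ E ≤ 2) {M : Set E} {x : E} (hM : M.Nonempty)
    (hx : x ∈ pos M) : ∃ v ∈ M, ∃ w ∈ M, ∃ p q : ℝ, 0 ≤ p ∧ 0 ≤ q ∧ x = p • v + q • w := by
  obtain ⟨s, c, hs, hcard, hc, rfl⟩ := exists_card_le_finrank_of_mem_pos hx
  classical
  replace hcard := hcard.trans hE
  interval_cases h : s.card
  · obtain ⟨v, hv⟩ := hM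
    exact ⟨v, hv, v, hv, 0, 0, le_rfl, le_rfl, by simp [Finset.card_eq_zero.mp h]⟩
  · obtain ⟨v, rfl⟩ := Finset.card_eq_one.mp h
    exact ⟨v, hs (by simp), v, hs (by simp), c v, 0, hc v, le_rfl, by simp⟩
  · obtain ⟨v, w, hvw, rfl⟩ := Finset.card_eq_two.mp h
    exact ⟨v, hs (by simp), w, hs (by simp), c v, c w, hc v, hc w, Finset.sum_pair hvw⟩

theorem pos_eq_univ_of_neg_eq {u v w : V2} {p q : ℝ} (hvw : det2 v w ≠ 0) (hp : 0 < p)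
    (hq : 0 < q) (h : -u = p • v + q • w) : pos {u, v, w} = Set.univ := by
  refine Set.eq_univ_of_forall fun x => ?_
  obtain ⟨α, β, rfl⟩ := exists_eq_smul_add_smul_of_det2_ne_zero hvw x
  set t := max 0 (max (-α / p) (-β / q))
  have hα : 0 ≤ α + t * p := by
    have := (div_le_iff₀ hp).mp ((le_max_left _ _).trans (le_max_right 0 _) : -α / p ≤ t)
    linarith
  have hβ : 0 ≤ β + t * q := by
    have := (div_le_iff₀ hq).mp ((le_max_right _ _).trans (le_max_right 0 _) : -β / q ≤ t)
    linarith
  convert smul_add_smul_add_smul_mem_pos (le_max_left _ _ : 0 ≤ t) hα hβ using 1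
  rw [← neg_neg u, h]
  module

theorem pos_ne_univ_of_subset {M : Set V2} {x y : V2} (hxy : det2 x y ≠ 0)
    (hM : M ⊆ {x, y, -y}) : pos M ≠ Set.univ := by
  set d : V2 := det2 y x • !₂[-y 1, y 0]
  have hd : ∀ m, ⟪d, m⟫ = det2 y x * det2 y m := fun m => by
    rw [real_inner_smul_left, inner_eq_det2]
  have hyx : det2 y x ≠ 0 := by rwa [det2_swap, neg_ne_zero]
  refine pos_ne_univ_of_inner_nonneg (d := d) (fun hd0 => ?_) fun m hm => ?_
  · have := hd x
    rw [hd0, inner_zero_left] at this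
    exact mul_ne_zero hyx hyx this.symm
  · rcases hM hm with rfl | rfl | rfl <;> simp [hd, mul_self_nonneg]

theorem mem_of_pos_eq_univ {M : Set V2} {x y : V2} (hxy : det2 x y ≠ 0)
    (hM : M ⊆ {x, -x, y, -y}) (huniv : pos M = Set.univ) : x ∈ M := by
  by_contra hx
  exact pos_ne_univ_of_subset (x := -x) (by simpa using hxy)
    ((Set.subset_insert_iff_of_notMem hx).mp hM) huniv

section Usq

variable {U : Set V2} {u v w : V2}

theorem notMem_Usq_of_neg_eq (hv : v ∈ U) (hw : w ∈ U) (hvw : det2 v w ≠ 0) {p q : ℝ}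
    (hp : 0 < p) (hq : 0 < q) (h : -u = p • v + q • w) : u ∉ Usq U :=
  fun hu => hu.2 ⟨v, hv, w, hw, pos_eq_univ_of_neg_eq hvw hp hq h⟩

theorem eq_or_eq_neg_of_det2_eq_zero_of_mem (hunit : ∀ v ∈ U, ‖v‖ = 1) (hv : v ∈ U)
    (hw : w ∈ U) (h : det2 v w = 0) : v = w ∨ v = -w :=
  eq_or_eq_neg_of_det2_eq_zero (norm_ne_zero_iff.mp (by simp [hunit w hw]))
    (by rw [hunit v hv, hunit w hw]) h

theorem neg_mem_of_mem_Usq (hunit : ∀ v ∈ U, ‖v‖ = 1) (hpos : pos U = Set.univ)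
    (hu : u ∈ Usq U) : -u ∈ U := by
  obtain ⟨v, hv, w, hw, p, q, hp, hq, h⟩ :=
    exists_smul_add_smul_of_mem_pos finrank_euclideanSpace_fin.le ⟨u, hu.1⟩
      (hpos ▸ Set.mem_univ (-u))
  have of_smul : ∀ z ∈ U, ∀ r : ℝ, 0 ≤ r → -u = r • z → -u ∈ U := fun z hz r hr hrz => by
    rwa [hrz, (SameRay.sameRay_nonneg_smul_left z hr).eq_of_norm_eq
      (by rw [← hrz, norm_neg, hunit u hu.1, hunit z hz])]
  rcases hp.eq_or_lt with rfl | hp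
  · exact of_smul w hw q hq (by simpa using h)
  rcases hq.eq_or_lt with rfl | hq
  · exact of_smul v hv p hp.le (by simpa using h)
  by_cases hvw : det2 v w = 0
  · rcases eq_or_eq_neg_of_det2_eq_zero_of_mem hunit hv hw hvw with rfl | rfl
    · exact of_smul v hv (p + q) (by positivity) (by rw [h, add_smul])
    · rcases le_total q p with hqp | hpq
      · exact of_smul (-w) hv (p - q) (by linarith) (by rw [h]; module)
      · exact of_smul w hw (q - p) (by linarith) (by rw [h]; module)
  · exact absurd hu (notMem_Usq_of_neg_eq hv hw hvw hp hq h)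

theorem det2_ne_zero_of_ne (hunit : ∀ v ∈ U, ‖v‖ = 1) (hw : w ∈ U) (hv : v ∈ U)
    (hwv : w ≠ v) (hwv' : w ≠ -v) : det2 w v ≠ 0 := fun h =>
  (eq_or_eq_neg_of_det2_eq_zero_of_mem hunit hw hv h).elim hwv hwv'

theorem exists_neg_eq_pos_smul_add_pos_smul {u₁ u₂ : V2} (h₁₂ : det2 u₁ u₂ ≠ 0)
    (hw₁ : det2 w u₁ ≠ 0) (hw₂ : det2 w u₂ ≠ 0) :
    ∃ a ∈ ({u₁, -u₁} : Set V2), ∃ b ∈ ({u₂, -u₂} : Set V2), ∃ p q : ℝ,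
      0 < p ∧ 0 < q ∧ -w = p • a + q • b := by
  obtain ⟨α, β, h⟩ := exists_eq_smul_add_smul_of_det2_ne_zero h₁₂ (-w)
  have hα : α ≠ 0 := by
    rintro rfl
    apply hw₂
    simpa using congrArg (det2 · u₂) h
  have hβ : β ≠ 0 := by
    rintro rfl
    apply hw₁
    simpa using congrArg (det2 · u₁) h
  obtain ⟨a, ha, p, hp, hpa⟩ := exists_pos_smul_eq_smul u₁ hα
  obtain ⟨b, hb, q, hq, hqb⟩ := exists_pos_smul_eq_smul u₂ hβ
  exact ⟨a, ha, b, hb, p, q, hp, hq, by rw [h, hpa, hqb]⟩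

theorem pair_subset_of_mem_Usq (hunit : ∀ v ∈ U, ‖v‖ = 1) (hpos : pos U = Set.univ)
    (hu : u ∈ Usq U) : {u, -u} ⊆ U :=
  Set.insert_subset hu.1 (Set.singleton_subset_iff.mpr (neg_mem_of_mem_Usq hunit hpos hu))

theorem det2_ne_zero_of_mem_pair {u₁ u₂ a b : V2} (h₁₂ : det2 u₁ u₂ ≠ 0)
    (ha : a ∈ ({u₁, -u₁} : Set V2)) (hb : b ∈ ({u₂, -u₂} : Set V2)) : det2 a b ≠ 0 := by
  rcases ha with rfl | rfl <;> rcases hb with rfl | rfl <;> simpa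

theorem Usq_subset_of_det2_ne_zero (hunit : ∀ v ∈ U, ‖v‖ = 1) (hpos : pos U = Set.univ)
    {u₁ u₂ : V2} (h₁ : u₁ ∈ Usq U) (h₂ : u₂ ∈ Usq U) (h₁₂ : det2 u₁ u₂ ≠ 0) :
    Usq U ⊆ {u₁, -u₁, u₂, -u₂} := by
  intro w hw
  by_contra hw'
  simp only [Set.mem_insert_iff, Set.mem_singleton_iff, not_or] at hw'
  obtain ⟨hne₁, hne₁', hne₂, hne₂'⟩ := hw'
  obtain ⟨a, ha, b, hb, p, q, hp, hq, h⟩ := exists_neg_eq_pos_smul_add_pos_smul h₁₂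
    (det2_ne_zero_of_ne hunit hw.1 h₁.1 hne₁ hne₁')
    (det2_ne_zero_of_ne hunit hw.1 h₂.1 hne₂ hne₂')
  exact notMem_Usq_of_neg_eq (pair_subset_of_mem_Usq hunit hpos h₁ ha)
    (pair_subset_of_mem_Usq hunit hpos h₂ hb) (det2_ne_zero_of_mem_pair h₁₂ ha hb) hp hq h hw

theorem Usq_subset_pair_of_forall_det2_eq_zero (hunit : ∀ v ∈ U, ‖v‖ = 1) (hu : u ∈ Usq U)
    (h : ∀ w ∈ Usq U, det2 w u = 0) : Usq U ⊆ {u, -u} := fun w hw =>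
  eq_or_eq_neg_of_det2_eq_zero_of_mem hunit hw.1 hu.1 (h w hw)

theorem exists_det2_ne_zero_of_two_lt_ncard (hunit : ∀ v ∈ U, ‖v‖ = 1)
    (h : 2 < (Usq U).ncard) : ∃ u₁ ∈ Usq U, ∃ u₂ ∈ Usq U, det2 u₁ u₂ ≠ 0 := by
  obtain ⟨u, hu⟩ := Set.nonempty_of_ncard_ne_zero (by omega : (Usq U).ncard ≠ 0)
  by_contra! hpar
  have := Set.ncard_le_ncard
    (Usq_subset_pair_of_forall_det2_eq_zero hunit hu fun w hw => hpar w hw u hu)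
  have := Set.ncard_insert_le u {-u}
  simp only [Set.ncard_singleton] at this
  omega

theorem ncard_Usq_le_four (hunit : ∀ v ∈ U, ‖v‖ = 1) (hpos : pos U = Set.univ) :
    (Usq U).ncard ≤ 4 := by
  by_contra! h
  obtain ⟨u₁, h₁, u₂, h₂, h₁₂⟩ := exists_det2_ne_zero_of_two_lt_ncard hunit (by omega)
  have := Set.ncard_le_ncard (Usq_subset_of_det2_ne_zero hunit hpos h₁ h₂ h₁₂)
  linarith [Set.ncard_le_four u₁ (-u₁) u₂ (-u₂)]

theorem eq_parallelogram_of_ncard_Usq_eq_four (hunit : ∀ v ∈ U, ‖v‖ = 1)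
    (hpos : pos U = Set.univ) (h4 : (Usq U).ncard = 4) :
    ∃ a c : V2, ‖a‖ = 1 ∧ ‖c‖ = 1 ∧ LinearIndependent ℝ ![a, c] ∧ U = {a, -a, c, -c} := by
  obtain ⟨u₁, h₁, u₂, h₂, h₁₂⟩ := exists_det2_ne_zero_of_two_lt_ncard hunit (by omega)
  have hUsq : Usq U = {u₁, -u₁, u₂, -u₂} :=
    Set.eq_of_subset_of_ncard_le (Usq_subset_of_det2_ne_zero hunit hpos h₁ h₂ h₁₂)
      (h4 ▸ Set.ncard_le_four _ _ _ _)
  refine ⟨u₁, u₂, hunit _ h₁.1, hunit _ h₂.1, linearIndependent_iff_det2_ne_zero.mpr h₁₂,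
    Set.Subset.antisymm (fun w hw => ?_) (hUsq ▸ fun x hx => hx.1)⟩
  by_contra hw'
  simp only [Set.mem_insert_iff, Set.mem_singleton_iff, not_or] at hw'
  obtain ⟨hne₁, hne₁', hne₂, hne₂'⟩ := hw'
  obtain ⟨a, ha, b, hb, p, q, hp, hq, h⟩ := exists_neg_eq_pos_smul_add_pos_smul h₁₂
    (det2_ne_zero_of_ne hunit hw h₁.1 hne₁ hne₁') (det2_ne_zero_of_ne hunit hw h₂.1 hne₂ hne₂')
  have hwb : det2 w b ≠ 0 := by
    have := congrArg (det2 · b) h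
    simp only [det2_neg_left, det2_add_left, det2_smul_left, det2_self, mul_zero,
      add_zero] at this
    rw [neg_eq_iff_eq_neg.mp this]
    exact neg_ne_zero.mpr (mul_ne_zero hp.ne' (det2_ne_zero_of_mem_pair h₁₂ ha hb))
  refine notMem_Usq_of_neg_eq (u := a) hw (pair_subset_of_mem_Usq hunit hpos h₂ hb) hwb
    (inv_pos.mpr hp) (div_pos hq hp) ?_ ?_
  · rw [← neg_neg w, h]
    match_scalars
    · field_simp
    · field_simp
      ring
  · rw [hUsq]
    rcases ha with rfl | rfl <;> simp

theorem ncard_parallelogram {a c : V2} (hac : det2 a c ≠ 0) :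
    ({a, -a, c, -c} : Set V2).ncard = 4 := by
  refine Set.ncard_eq_four.mpr ⟨a, -a, c, -c, ?_, ?_, ?_, ?_, ?_, ?_, rfl⟩ <;> intro h <;>
    apply hac
  · linarith [det2_neg_left a c, congrArg (det2 · c) h]
  · simp [h]
  · simp [h]
  · simp [← h]
  · simp [neg_inj.mp h]
  · linarith [det2_neg_right a c, congrArg (det2 a ·) h]

theorem Usq_parallelogram {a c : V2} (hac : det2 a c ≠ 0) :
    Usq {a, -a, c, -c} = {a, -a, c, -c} := by
  refine Set.Subset.antisymm (fun x hx => hx.1) fun u hu => ⟨hu, ?_⟩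
  rintro ⟨v, hv, w, hw, huniv⟩
  have hT : ({u, v, w} : Set V2) ⊆ {a, -a, c, -c} :=
    Set.insert_subset hu (Set.insert_subset hv (Set.singleton_subset_iff.mpr hw))
  have mem : ∀ x y : V2, det2 x y ≠ 0 → ({a, -a, c, -c} : Set V2) ⊆ {x, -x, y, -y} →
      x ∈ ({u, v, w} : Set V2) := fun x y hxy h =>
    mem_of_pos_eq_univ hxy (hT.trans h) huniv
  have hca : det2 c a ≠ 0 := by rwa [det2_swap, neg_ne_zero]
  have hsub : ({a, -a, c, -c} : Set V2) ⊆ {u, v, w} := by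
    rintro x (rfl | rfl | rfl | rfl)
    · exact mem x c hac subset_rfl
    · exact mem (-a) c (by simpa using hac) fun m => by
        simp only [Set.mem_insert_iff, Set.mem_singleton_iff, neg_neg]; tauto
    · exact mem x a hca fun m => by
        simp only [Set.mem_insert_iff, Set.mem_singleton_iff]; tauto
    · exact mem (-c) a (by simpa using hca) fun m => by
        simp only [Set.mem_insert_iff, Set.mem_singleton_iff, neg_neg]; tauto
  have := Set.ncard_le_ncard hsub
  rw [ncard_parallelogram hac] at this
  linarith [Set.ncard_le_three u v w]

end Usq

theorem stmt4_general (U : Set V2) (hunit : ∀ v ∈ U, ‖v‖ = 1)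
    (hpos : pos U = Set.univ) :
    (Usq U).ncard ≤ 4 ∧
    ((Usq U).ncard = 4 ↔
      ∃ a c : V2, ‖a‖ = 1 ∧ ‖c‖ = 1 ∧ LinearIndependent ℝ ![a, c] ∧
        U = {a, -a, c, -c}) := by
  refine ⟨ncard_Usq_le_four hunit hpos, eq_parallelogram_of_ncard_Usq_eq_four hunit hpos, ?_⟩
  rintro ⟨a, c, -, -, hac, rfl⟩
  have hac := linearIndependent_iff_det2_ne_zero.mp hac
  rw [Usq_parallelogram hac, ncard_parallelogram hac]

/-- `|U_□| ≤ 4`, with equality iff `U` defines a parallelogram. -/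
theorem stmt4 (U : Set V2) (hfin : U.Finite) (hunit : ∀ v ∈ U, ‖v‖ = 1)
    (hpos : pos U = Set.univ) :
    (Usq U).ncard ≤ 4 ∧
    ((Usq U).ncard = 4 ↔
      ∃ a c : V2, ‖a‖ = 1 ∧ ‖c‖ = 1 ∧ LinearIndependent ℝ ![a, c] ∧
        U = {a, -a, c, -c}) :=
  stmt4_general U hunit hpos
end
end

section
/- Let U ⊆ S¹ ⊂ ℝ² be a finite set of pairwise distinct unit vectors in general position (any two are linearly independent) with pos(U) = ℝ² and |U| ≥ 3. Then U = U_Δ, i.e., for every u ∈ U there exist v, w ∈ U with pos{u, v, w} = ℝ². -/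
/-!
The cone `pos U` contains `-u`. By the conic Carathéodory theorem `-u` is a positive combination
of linearly independent vectors of `U`, so of at most two of them in the plane. General position
excludes a single one (it would be a negative multiple of `u`), so `-u = b • v + c • w` with
`b, c > 0` and `v, w` independent. The cone on `u, v, w` then contains `-v = b⁻¹ • (u + c • w)`
and likewise `-w`, hence all of `span {v, w} = ℝ²`.
-/

open RealInnerProductSpace

noncomputable section

open Module

section

variable {E : Type*} [AddCommGroup E] [Module ℝ E]

theorem pos_eq_hull (M : Set E) : pos M = PointedCone.hull ℝ M := by
  ext x
  refine ⟨?_, fun hx => ?_⟩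
  · rintro ⟨s, c, hsM, hc, rfl⟩
    exact Submodule.sum_mem _ fun v hv =>
      PointedCone.smul_mem _ (hc v) (PointedCone.subset_hull (hsM hv))
  · obtain ⟨c, hcM, hc, rfl⟩ := PointedCone.mem_hull_set.mp hx
    exact ⟨c.support, c, hcM, hc, rfl⟩

theorem PointedCone.smul_mem_of_neg_mem (C : PointedCone ℝ E) {v : E} (hv : v ∈ C)
    (hnv : -v ∈ C) (p : ℝ) : p • v ∈ C := by
  rcases le_total 0 p with hp | hp
  · exact C.smul_mem hp hv
  · simpa using C.smul_mem (neg_nonneg.mpr hp) hnv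

theorem PointedCone.neg_mem_of_smul_add_eq_zero (C : PointedCone ℝ E) {v y : E} {b : ℝ}
    (hy : y ∈ C) (hb : 0 < b) (h : b • v + y = 0) : -v ∈ C := by
  have hv : -v = b⁻¹ • y := by
    rw [eq_neg_of_add_eq_zero_right h, smul_neg, inv_smul_smul₀ hb.ne']
  exact hv ▸ C.smul_mem (inv_nonneg.mpr hb.le) hy

theorem exists_erase_of_not_linearIndepOn [DecidableEq E] {s : Finset E} {c : E → ℝ}
    (hc : ∀ v, 0 ≤ c v) (hs : ¬LinearIndepOn ℝ id (s : Set E)) :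
    ∃ i ∈ s, ∃ c' : E → ℝ, (∀ v, 0 ≤ c' v) ∧ ∑ v ∈ s, c v • v = ∑ v ∈ s.erase i, c' v • v := by
  obtain ⟨g, hg, j, hj, hgj⟩ : ∃ g : E → ℝ, ∑ v ∈ s, g v • v = 0 ∧ ∃ j ∈ s, 0 < g j := by
    obtain ⟨g, hg, j, hj, hgj⟩ := not_linearIndepOn_finset_iff.mp hs
    simp only [id] at hg
    rcases hgj.lt_or_gt with hneg | hpos
    · refine ⟨-g, ?_, j, hj, neg_pos.mpr hneg⟩
      simp only [Pi.neg_apply, neg_smul, Finset.sum_neg_distrib, hg, neg_zero]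
    · exact ⟨g, hg, j, hj, hpos⟩
  -- Move `c` along the relation `g` until the first coefficient vanishes.
  obtain ⟨i, hi, hmin⟩ :=
    (s.filter (0 < g ·)).exists_min_image (fun v => c v / g v) ⟨j, by simp [hj, hgj]⟩
  rw [Finset.mem_filter] at hi
  set t := c i / g i
  have ht : 0 ≤ t := div_nonneg (hc i) hi.2.le
  refine ⟨i, hi.1, fun v => if v ∈ s then c v - t * g v else 0, fun v => ?_, ?_⟩
  · dsimp only
    split_ifs with hv
    · rcases lt_or_ge 0 (g v) with hgv | hgv
      · have := hmin v (Finset.mem_filter.mpr ⟨hv, hgv⟩)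
        rw [le_div_iff₀ hgv] at this
        linarith
      · nlinarith [hc v]
    · exact le_rfl
  · rw [Finset.sum_erase _ (by simp [hi.1, t, div_mul_cancel₀ _ hi.2.ne'])]
    calc ∑ v ∈ s, c v • v = ∑ v ∈ s, c v • v - t • ∑ v ∈ s, g v • v := by
          rw [hg, smul_zero, sub_zero]
      _ = _ := by
          rw [Finset.smul_sum, ← Finset.sum_sub_distrib]
          refine Finset.sum_congr rfl fun v hv => ?_
          simp only [if_pos hv, sub_smul, mul_smul]

theorem exists_linearIndepOn_of_mem_pos {M : Set E} {x : E} (hx : x ∈ pos M) :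
    ∃ (s : Finset E) (c : E → ℝ), ↑s ⊆ M ∧ LinearIndepOn ℝ id (s : Set E) ∧
      (∀ v ∈ s, 0 < c v) ∧ x = ∑ v ∈ s, c v • v := by
  classical
  obtain ⟨s, c, hsM, hc, rfl⟩ := hx
  induction s using Finset.strongInduction generalizing c with
  | H s ih =>
  by_cases hs : LinearIndepOn ℝ id (s : Set E)
  · refine ⟨s.filter (0 < c ·), c, fun v hv => hsM (Finset.mem_filter.mp hv).1,
      hs.mono (Finset.coe_subset.mpr (Finset.filter_subset _ _)),
      fun v hv => (Finset.mem_filter.mp hv).2, ?_⟩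
    exact (Finset.sum_filter_of_ne fun v _ hv => (hc v).lt_of_ne' (left_ne_zero_of_smul hv)).symm
  · obtain ⟨i, hi, c', hc', hsum⟩ := exists_erase_of_not_linearIndepOn hc hs
    rw [hsum]
    exact ih _ (Finset.erase_ssubset hi) c'
      ((Finset.coe_subset.mpr (s.erase_subset i)).trans hsM) hc'

def InGeneralPosition (U : Set E) : Prop :=
  ∀ v ∈ U, ∀ w ∈ U, v ≠ w → LinearIndependent ℝ ![v, w]

theorem InGeneralPosition.smul_add_smul_ne_zero {U : Set E} (hU : InGeneralPosition U)
    {u y : E} (hu : u ∈ U) (hy : y ∈ U) (hu0 : u ≠ 0) {a b : ℝ} (ha : 0 < a) (hb : 0 ≤ b) :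
    a • u + b • y ≠ 0 := by
  intro h
  by_cases huy : u = y
  · subst huy
    rw [← add_smul] at h
    exact hu0 ((smul_eq_zero.mp h).resolve_left (by linarith))
  · exact ha.ne' (LinearIndependent.pair_iff.mp (hU u hu y hy huy) a b h).1

theorem exists_smul_add_smul_eq (h2 : finrank ℝ E = 2) {v w : E}
    (hvw : LinearIndependent ℝ ![v, w]) (x : E) : ∃ p q : ℝ, p • v + q • w = x := by
  have htop := hvw.span_eq_top_of_card_eq_finrank (by simp [h2])
  rw [Matrix.range_cons_cons_empty] at htop
  exact Submodule.mem_span_pair.mp (htop ▸ Submodule.mem_top)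

theorem pos_eq_univ_of_neg_eq_smul_add_smul (h2 : finrank ℝ E = 2) {u v w : E}
    (hvw : LinearIndependent ℝ ![v, w]) {b c : ℝ} (hb : 0 < b) (hc : 0 < c)
    (huvw : -u = b • v + c • w) : pos {u, v, w} = Set.univ := by
  set C := PointedCone.hull ℝ ({u, v, w} : Set E)
  have hu : u ∈ C := PointedCone.subset_hull (by simp)
  have hv : v ∈ C := PointedCone.subset_hull (by simp)
  have hw : w ∈ C := PointedCone.subset_hull (by simp)
  have hnv : -v ∈ C := C.neg_mem_of_smul_add_eq_zero (C.add_mem hu (C.smul_mem hc.le hw)) hb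
    (by rw [← neg_add_cancel u, huvw]; abel)
  have hnw : -w ∈ C := C.neg_mem_of_smul_add_eq_zero (C.add_mem hu (C.smul_mem hb.le hv)) hc
    (by rw [← neg_add_cancel u, huvw]; abel)
  rw [pos_eq_hull, Set.eq_univ_iff_forall]
  intro x
  obtain ⟨p, q, rfl⟩ := exists_smul_add_smul_eq h2 hvw x
  exact C.add_mem (C.smul_mem_of_neg_mem hv hnv p) (C.smul_mem_of_neg_mem hw hnw q)

theorem InGeneralPosition.exists_neg_eq_smul_add_smul (h2 : finrank ℝ E = 2) {U : Set E}
    (hU : InGeneralPosition U) {u : E} (hu : u ∈ U) (hu0 : u ≠ 0) (hneg : -u ∈ pos U) :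
    ∃ v ∈ U, ∃ w ∈ U, v ≠ w ∧ ∃ b c : ℝ, 0 < b ∧ 0 < c ∧ -u = b • v + c • w := by
  classical
  have : FiniteDimensional ℝ E := .of_finrank_pos (by omega)
  obtain ⟨s, c, hsU, hli, hc, hsum⟩ := exists_linearIndepOn_of_mem_pos hneg
  have hcard : s.card ≤ 2 := h2 ▸ LinearIndependent.finset_card_le_finrank hli
  obtain hs | hs | hs : s.card = 0 ∨ s.card = 1 ∨ s.card = 2 := by omega
  · rw [Finset.card_eq_zero.mp hs, Finset.sum_empty, neg_eq_zero] at hsum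
    exact absurd hsum hu0
  · obtain ⟨y, rfl⟩ := Finset.card_eq_one.mp hs
    rw [Finset.sum_singleton] at hsum
    exact absurd (by rw [one_smul, ← hsum, add_neg_cancel])
      (hU.smul_add_smul_ne_zero hu (hsU (by simp)) hu0 one_pos (hc y (by simp)).le)
  · obtain ⟨v, w, hvw, rfl⟩ := Finset.card_eq_two.mp hs
    rw [Finset.sum_pair hvw] at hsum
    exact ⟨v, hsU (by simp), w, hsU (by simp), hvw, c v, c w, hc v (by simp), hc w (by simp), hsum⟩

end

theorem stmt18_general (U : Set V2) (hunit : ∀ v ∈ U, ‖v‖ = 1)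
    (hgen : ∀ v ∈ U, ∀ w ∈ U, v ≠ w → LinearIndependent ℝ ![v, w])
    (hpos : pos U = Set.univ) :
    ∀ u ∈ U, ∃ v ∈ U, ∃ w ∈ U, pos {u, v, w} = Set.univ := by
  have h2 : finrank ℝ V2 = 2 := finrank_euclideanSpace_fin
  intro u hu
  have hu0 : u ≠ 0 := ne_zero_of_norm_ne_zero (by simp [hunit u hu])
  obtain ⟨v, hv, w, hw, hvw, b, c, hb, hc, huvw⟩ :=
    InGeneralPosition.exists_neg_eq_smul_add_smul h2 hgen hu hu0 (hpos ▸ Set.mem_univ (-u))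
  exact ⟨v, hv, w, hw, pos_eq_univ_of_neg_eq_smul_add_smul h2 (hgen v hv w hw hvw) hb hc huvw⟩

/-- For `U` in general position with `pos U = ℝ²` and `|U| ≥ 3`, every `u ∈ U`
belongs to a positively spanning triple, i.e. `U = U_Δ`. -/
theorem stmt18 (U : Set V2) (hfin : U.Finite) (hunit : ∀ v ∈ U, ‖v‖ = 1)
    (hgen : ∀ v ∈ U, ∀ w ∈ U, v ≠ w → LinearIndependent ℝ ![v, w])
    (hpos : pos U = Set.univ) (hcard : 3 ≤ U.ncard) :
    ∀ u ∈ U, ∃ v ∈ U, ∃ w ∈ U, pos {u, v, w} = Set.univ :=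
  stmt18_general U hunit hgen hpos
end
end
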